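/- Let f : ℕ → ℝ be injective on {1,...,j} with f(r) ≠ 0 for 1 ≤ r ≤ j. Then for all n ≥ 1 and j ≥ 1, H_{j,n} = h_{n-j}(f(1),...,f(j)) = ∑_{r=1}^{j} f(r)^{n-1} / ∏_{k=1, k≠r}^{j} (f(r) - f(k)). -/

import Mathlib

/-- The `r`-th complete homogeneous symmetric polynomial in the variables
`x 1, …, x k`. -/
def hsymmF {R : Type*} [CommRing R] (x : ℕ → R) (k r : ℕ) : R :=
  ∑ c ∈ Finset.Nat.antidiagonalTuple k r, ∏ i : Fin k, x ((i : ℕ) + 1) ^ c i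

/-- `H f j n = h_{n-j}(f 1, …, f j)`, and `0` when `n < j`. -/
noncomputable def Hf (f : ℕ → ℝ) (j n : ℕ) : ℝ :=
  if n < j then 0 else hsymmF f j (n - j)

lemma hsymmF_one_var {R : Type*} [CommRing R] (x : ℕ → R) (r : ℕ) :
    hsymmF x 1 r = x 1 ^ r := by
  simp [hsymmF]

lemma hsymmF_zero {R : Type*} [CommRing R] (x : ℕ → R) (k : ℕ) :
    hsymmF x k 0 = 1 := by
  simp [hsymmF, Finset.Nat.antidiagonalTuple_zero_right]

lemma hsymmF_expand {R : Type*} [CommRing R] (x : ℕ → R) (k r : ℕ) :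
    hsymmF x (k + 1) r =
      ∑ p ∈ Finset.HasAntidiagonal.antidiagonal r, x 1 ^ p.1 * hsymmF (fun n => x (n + 1)) k p.2 := by
  unfold hsymmF
  simp_rw [Finset.mul_sum]
  rw [Finset.sum_sigma']
  refine Finset.sum_nbij' (i := fun c => ⟨(c 0, ∑ i : Fin k, c i.succ), Fin.tail c⟩)
    (j := fun pc => Fin.cons pc.1.1 pc.2) ?_ ?_ ?_ ?_ ?_
  · intro c hc
    rw [Finset.Nat.mem_antidiagonalTuple] at hc
    rw [Finset.mem_sigma]
    constructor
    · rw [Finset.HasAntidiagonal.mem_antidiagonal]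
      rw [← hc, Fin.sum_univ_succ]
    · exact Finset.Nat.mem_antidiagonalTuple.mpr rfl
  · intro pc hpc
    rw [Finset.mem_sigma] at hpc
    rw [Finset.Nat.mem_antidiagonalTuple, Fin.sum_univ_succ]
    simp only [Fin.cons_zero, Fin.cons_succ]
    have h1 := Finset.HasAntidiagonal.mem_antidiagonal.mp hpc.1
    have h2 := Finset.Nat.mem_antidiagonalTuple.mp hpc.2
    rw [h2, h1]
  · intro c _
    exact Fin.cons_self_tail c
  · intro pc hpc
    rw [Finset.mem_sigma] at hpc
    have h2 := Finset.Nat.mem_antidiagonalTuple.mp hpc.2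
    refine Sigma.ext ?_ (by simp [Fin.tail_cons])
    simp only [Fin.cons_zero, Fin.cons_succ]
    rw [h2]
  · intro c _
    simp [Fin.prod_univ_succ, Fin.tail]

lemma hsymmF_rec {R : Type*} [CommRing R] (x : ℕ → R) (k s : ℕ) :
    hsymmF x (k + 1) (s + 1) =
      hsymmF (fun n => x (n + 1)) k (s + 1) + x 1 * hsymmF x (k + 1) s := by
  rw [hsymmF_expand, hsymmF_expand, Finset.mul_sum, Finset.Nat.antidiagonal_succ,
    Finset.sum_cons, Finset.sum_map]
  simp only [pow_zero, one_mul, Function.Embedding.prodMap, Function.Embedding.coeFn_mk,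
    Prod.map, Function.Embedding.refl_apply]
  congr 1
  refine Finset.sum_congr rfl fun p _ => ?_
  rw [pow_succ]
  ring

lemma coeff_basis_lag (s : Finset ℕ) (v : ℕ → ℝ) (hvs : Set.InjOn v ↑s) {i : ℕ}
    (hi : i ∈ s) :
    (Lagrange.basis s v i).coeff (s.card - 1) = ∏ k ∈ s.erase i, (v i - v k)⁻¹ := by
  have hd := Lagrange.natDegree_basis hvs hi
  rw [← hd, Polynomial.coeff_natDegree, Lagrange.basis, Polynomial.leadingCoeff_prod]
  refine Finset.prod_congr rfl fun k _ => ?_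
  rw [Lagrange.basisDivisor, Polynomial.leadingCoeff_mul, Polynomial.leadingCoeff_C,
    Polynomial.leadingCoeff_X_sub_C, mul_one]

lemma sum_inv_prod_sub (s : Finset ℕ) (v : ℕ → ℝ) (h2 : 2 ≤ s.card)
    (hvs : Set.InjOn v ↑s) :
    ∑ r ∈ s, (∏ k ∈ s.erase r, (v r - v k))⁻¹ = 0 := by
  have hs : s.Nonempty := Finset.card_pos.mp (by omega)
  have h1 := Lagrange.sum_basis hvs hs
  have h := congrArg (fun p => Polynomial.coeff p (s.card - 1)) h1
  simp only [Polynomial.finset_sum_coeff, Polynomial.coeff_one] at h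
  rw [if_neg (by omega)] at h
  rw [Finset.sum_congr rfl (fun i hi => coeff_basis_lag s v hvs hi)] at h
  rw [← h]
  refine Finset.sum_congr rfl fun r _ => ?_
  rw [← Finset.prod_inv_distrib]

lemma key_lemma (m : ℕ) : ∀ (f : ℕ → ℝ) (j : ℕ), 1 ≤ j →
    (∀ r ∈ Finset.Icc 1 j, ∀ k ∈ Finset.Icc 1 j, f r = f k → r = k) →
    (∑ r ∈ Finset.Icc 1 j, f r ^ m / ∏ k ∈ (Finset.Icc 1 j).erase r, (f r - f k))
      = if m + 1 < j then 0 else hsymmF f j (m + 1 - j) := by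
  induction m with
  | zero =>
    intro f j hj hinj
    rcases Nat.eq_or_lt_of_le hj with h1 | h2
    · subst h1
      simp [hsymmF_zero]
    · rw [if_pos (by omega)]
      have hcard : (Finset.Icc 1 j).card = j := by
        rw [Nat.card_Icc]; omega
      have hvs : Set.InjOn f ↑(Finset.Icc 1 j) := fun a ha b hb hab =>
        hinj a (by simpa using ha) b (by simpa using hb) hab
      have := sum_inv_prod_sub (Finset.Icc 1 j) f (by omega) hvs
      rw [← this]
      refine Finset.sum_congr rfl fun r _ => ?_
      rw [pow_zero, one_div]
  | succ m ih =>
    intro f j hj hinj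
    obtain ⟨j', rfl⟩ : ∃ j', j = j' + 1 := ⟨j - 1, by omega⟩
    rcases Nat.eq_or_lt_of_le hj with h1 | h2
    · obtain rfl : j' = 0 := by omega
      simp [hsymmF_one_var]
    · have hj' : 1 ≤ j' := by omega
      set g : ℕ → ℝ := fun n => f (n + 1) with hg
      have hpow : ∀ r : ℕ, f r ^ (m + 1) = f 1 * f r ^ m + f r ^ m * (f r - f 1) :=
        fun r => by ring
      simp_rw [hpow, add_div, mul_div_assoc, Finset.sum_add_distrib, ← Finset.mul_sum]
      rw [ih f (j' + 1) hj hinj]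
      -- second sum
      have hsub : Finset.Icc 2 (j' + 1) ⊆ Finset.Icc 1 (j' + 1) := by
        intro a ha; rw [Finset.mem_Icc] at *; omega
      have hterm : ∀ r ∈ Finset.Icc 2 (j' + 1),
          f r ^ m * ((f r - f 1) / ∏ k ∈ (Finset.Icc 1 (j' + 1)).erase r, (f r - f k))
          = f r ^ m / ∏ k ∈ (Finset.Icc 2 (j' + 1)).erase r, (f r - f k) := by
        intro r hr
        rw [Finset.mem_Icc] at hr
        have herase : (Finset.Icc 1 (j' + 1)).erase r
            = insert 1 ((Finset.Icc 2 (j' + 1)).erase r) := by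
          ext a
          simp only [Finset.mem_erase, Finset.mem_Icc, Finset.mem_insert]
          omega
        have h1n : (1 : ℕ) ∉ (Finset.Icc 2 (j' + 1)).erase r := by
          simp [Finset.mem_Icc]
        have hne1 : f r - f 1 ≠ 0 := by
          intro hcon
          have heq : f r = f 1 := by linarith
          have := hinj r (by rw [Finset.mem_Icc]; omega) 1
            (by rw [Finset.mem_Icc]; omega) heq
          omega
        rw [herase, Finset.prod_insert h1n, div_mul_cancel_left₀ hne1, div_eq_mul_inv]
      have hsecond :
          (∑ r ∈ Finset.Icc 1 (j' + 1),
              f r ^ m * ((f r - f 1) / ∏ k ∈ (Finset.Icc 1 (j' + 1)).erase r, (f r - f k)))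
          = ∑ r ∈ Finset.Icc 1 j',
              g r ^ m / ∏ k ∈ (Finset.Icc 1 j').erase r, (g r - g k) := by
        rw [← Finset.sum_subset hsub (by
          intro a ha hna
          rw [Finset.mem_Icc] at ha
          rw [Finset.mem_Icc] at hna
          have : a = 1 := by omega
          subst this
          rw [sub_self, zero_div, mul_zero])]
        rw [Finset.sum_congr rfl hterm]
        have hmap : Finset.Icc 2 (j' + 1) =
            (Finset.Icc 1 j').map (addRightEmbedding 1) := by
          rw [Finset.map_add_right_Icc]
        rw [hmap, Finset.sum_map]
        refine Finset.sum_congr rfl fun r hr => ?_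
        have hre : addRightEmbedding 1 r = r + 1 := rfl
        rw [hre]
        have hmaperase : ((Finset.Icc 1 j').map (addRightEmbedding 1)).erase (r + 1)
            = ((Finset.Icc 1 j').erase r).map (addRightEmbedding 1) := by
          exact (Finset.map_erase (addRightEmbedding 1) (Finset.Icc 1 j') r).symm
        rw [hmaperase, Finset.prod_map]
        rfl
      rw [hsecond, ih g j' hj' (fun r hr k hk hgk => by
        rw [Finset.mem_Icc] at hr hk
        have := hinj (r + 1) (by simp [Finset.mem_Icc]; omega) (k + 1)
          (by simp [Finset.mem_Icc]; omega) hgk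
        omega)]
      -- now case analysis
      rcases lt_trichotomy (m + 1) j' with hc | hc | hc
      · rw [if_pos (by omega), if_pos (by omega), if_pos (by omega)]
        ring
      · rw [if_pos (by omega), if_neg (by omega), if_neg (by omega)]
        have e1 : m + 1 - j' = 0 := by omega
        have e2 : m + 1 + 1 - (j' + 1) = 0 := by omega
        rw [e1, e2, hsymmF_zero, hsymmF_zero]
        ring
      · rw [if_neg (by omega), if_neg (by omega), if_neg (by omega)]
        have e1 : m + 1 - (j' + 1) = m - j' := by omega
        have e2 : m + 1 + 1 - (j' + 1) = (m - j') + 1 := by omega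
        have e3 : m + 1 - j' = (m - j') + 1 := by omega
        rw [e1, e2, e3, hsymmF_rec]
        ring

theorem Hf_lagrange (f : ℕ → ℝ) (j n : ℕ) (hj : 1 ≤ j) (hn : 1 ≤ n)
    (hne : ∀ r ∈ Finset.Icc 1 j, f r ≠ 0)
    (hinj : ∀ r ∈ Finset.Icc 1 j, ∀ k ∈ Finset.Icc 1 j, f r = f k → r = k) :
    Hf f j n =
      ∑ r ∈ Finset.Icc 1 j,
        f r ^ (n - 1) / ∏ k ∈ (Finset.Icc 1 j).erase r, (f r - f k) := by
  obtain ⟨m, rfl⟩ : ∃ m, n = m + 1 := ⟨n - 1, by omega⟩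
  have := key_lemma m f j hj hinj
  rw [Nat.add_sub_cancel, this, Hf]
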